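/- Let r > 0 and let n ≥ 1 be a natural number. For x̃ ∈ ℝ², write d_M²(x̃) = (x̃ − m(x̃))ᵀ Σ(x̃)⁻¹ (x̃ − m(x̃)), where m(x̃) = x̃/(n+1) and Σ(x̃) = (n r²/(4(n+1)))·I₂ + (n/(n+1)²)·x̃ x̃ᵀ. Then d_M² is monotone in the norm of the poisoned sample: for any x̃₁, x̃₂ ∈ ℝ² with ‖x̃₁‖ ≤ ‖x̃₂‖, one has d_M²(x̃₁) ≤ d_M²(x̃₂). In particular, a boundary sample x̃_b with ‖x̃_b‖ ≤ ‖x̃_u‖ for a randomly chosen x̃_u has squared Mahalanobis distance from the poisoned target class no larger than that of x̃_u. -/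

import Mathlib

/-!
The centred sample `x̃ - m(x̃) = (1 - (n+1)⁻¹) x̃` is an eigenvector of `Σ(x̃) = a I + b x̃ x̃ᵀ`
with eigenvalue `a + b ‖x̃‖²`, so `d_M²(x̃) = (1 - (n+1)⁻¹)² ‖x̃‖² / (a + b ‖x̃‖²)`. Since `a > 0` and
`b ≥ 0`, the map `t ↦ t / (a + b t)` is nondecreasing on `[0, ∞)`.
-/

open Matrix

namespace Matrix

variable {ι : Type*} [Fintype ι] [DecidableEq ι]

theorem inv_mulVec_eq_inv_smul_of_mulVec_eq_smul {K : Type*} [Field K] {M : Matrix ι ι K}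
    (hM : IsUnit M.det) {v : ι → K} {c : K} (h : M *ᵥ v = c • v) : M⁻¹ *ᵥ v = c⁻¹ • v := by
  have hv : v = c • M⁻¹ *ᵥ v := by
    rw [← mulVec_smul, ← h, mulVec_mulVec, nonsing_inv_mul M hM, one_mulVec]
  rcases eq_or_ne c 0 with rfl | hc
  · rw [zero_smul] at hv
    simp [hv]
  · conv_rhs => rw [hv]
    rw [smul_smul, inv_mul_cancel₀ hc, one_smul]

theorem smul_one_add_smul_vecMulVec_self_mulVec {R : Type*} [CommRing R] (a b : R)
    (v : ι → R) :
    (a • 1 + b • vecMulVec v v) *ᵥ v = (a + b * (v ⬝ᵥ v)) • v := by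
  rw [add_mulVec, smul_mulVec, smul_mulVec, one_mulVec, vecMulVec_mulVec, op_smul_eq_smul,
    add_smul, mul_smul]

theorem posDef_smul_one_add_smul_vecMulVec_self {a b : ℝ} (ha : 0 < a) (hb : 0 ≤ b)
    (v : ι → ℝ) : (a • 1 + b • vecMulVec v v).PosDef :=
  (PosDef.one.smul ha).add_posSemidef (by simpa using (posSemidef_vecMulVec_self_star v).smul hb)

theorem dotProduct_inv_smul_one_add_smul_vecMulVec_self_mulVec {a b : ℝ} (ha : 0 < a)
    (hb : 0 ≤ b) (v : ι → ℝ) :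
    v ⬝ᵥ (a • 1 + b • vecMulVec v v)⁻¹ *ᵥ v = (v ⬝ᵥ v) / (a + b * (v ⬝ᵥ v)) := by
  have hdet := (posDef_smul_one_add_smul_vecMulVec_self ha hb v).det_pos.ne'.isUnit
  rw [inv_mulVec_eq_inv_smul_of_mulVec_eq_smul hdet
    (smul_one_add_smul_vecMulVec_self_mulVec a b v), dotProduct_smul, smul_eq_mul, div_eq_inv_mul]

end Matrix

theorem EuclideanSpace.ofLp_dotProduct_ofLp_self {ι : Type*} [Fintype ι]
    (x : EuclideanSpace ℝ ι) : x.ofLp ⬝ᵥ x.ofLp = ‖x‖ ^ 2 := by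
  rw [← real_inner_self_eq_norm_sq, EuclideanSpace.inner_eq_star_dotProduct, star_trivial]

theorem monotoneOn_div_add_mul_self {a b : ℝ} (ha : 0 < a) (hb : 0 ≤ b) :
    MonotoneOn (fun t => t / (a + b * t)) (Set.Ici 0) := by
  intro s (hs : 0 ≤ s) t (ht : 0 ≤ t) hst
  rw [div_le_div_iff₀ (by positivity) (by positivity)]
  nlinarith

/-- The squared Mahalanobis distance `d_M²(x̃)` of a poisoned sample from the poisoned target
class (mean `x̃/(n+1)`, covariance `(n r²/(4(n+1)))·I₂ + (n/(n+1)²)·x̃ x̃ᵀ`) is monotone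
nondecreasing in `‖x̃‖`: if `‖x̃₁‖ ≤ ‖x̃₂‖` then `d_M²(x̃₁) ≤ d_M²(x̃₂)`. -/
theorem mahalanobis_monotone_in_norm
    (r : ℝ) (hr : 0 < r) (n : ℕ) (hn : 1 ≤ n)
    (dM : EuclideanSpace ℝ (Fin 2) → ℝ)
    (hdM : ∀ xt : EuclideanSpace ℝ (Fin 2),
      dM xt = (xt - ((n : ℝ) + 1)⁻¹ • xt) ⬝ᵥ
        ((((n : ℝ) * r ^ 2 / (4 * ((n : ℝ) + 1))) • (1 : Matrix (Fin 2) (Fin 2) ℝ)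
            + ((n : ℝ) / ((n : ℝ) + 1) ^ 2) • Matrix.of (fun i j => xt i * xt j))⁻¹
          *ᵥ (xt - ((n : ℝ) + 1)⁻¹ • xt))) :
    ∀ xt₁ xt₂ : EuclideanSpace ℝ (Fin 2), ‖xt₁‖ ≤ ‖xt₂‖ → dM xt₁ ≤ dM xt₂ := by
  set a : ℝ := (n : ℝ) * r ^ 2 / (4 * ((n : ℝ) + 1))
  set b : ℝ := (n : ℝ) / ((n : ℝ) + 1) ^ 2
  set c : ℝ := 1 - ((n : ℝ) + 1)⁻¹
  have hn₀ : (0 : ℝ) < n := by exact_mod_cast hn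
  have ha : 0 < a := by positivity
  have hb : 0 ≤ b := by positivity
  have hcentre : ∀ x : EuclideanSpace ℝ (Fin 2), (x - ((n : ℝ) + 1)⁻¹ • x).ofLp = c • x.ofLp :=
    fun x => by rw [WithLp.ofLp_sub, WithLp.ofLp_smul, sub_smul, one_smul]
  have hdM_eq : ∀ x, dM x = c ^ 2 * (‖x‖ ^ 2 / (a + b * ‖x‖ ^ 2)) := by
    intro x
    rw [hdM, hcentre,
      show Matrix.of (fun i j => x i * x j) = vecMulVec x.ofLp x.ofLp from rfl, mulVec_smul,
      smul_dotProduct, dotProduct_smul,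
      dotProduct_inv_smul_one_add_smul_vecMulVec_self_mulVec ha hb,
      EuclideanSpace.ofLp_dotProduct_ofLp_self, smul_eq_mul, smul_eq_mul, ← mul_assoc, ← sq c]
  intro x₁ x₂ hx
  rw [hdM_eq, hdM_eq]
  have hsq : ‖x₁‖ ^ 2 ≤ ‖x₂‖ ^ 2 := pow_le_pow_left₀ (norm_nonneg _) hx 2
  exact mul_le_mul_of_nonneg_left (monotoneOn_div_add_mul_self ha hb
    (Set.mem_Ici.2 (sq_nonneg _)) (Set.mem_Ici.2 (sq_nonneg _)) hsq) (sq_nonneg c)
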